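/- Let n, m ≥ 1 and ε ≥ 0. Let L_c, L_s, L_c', L_s' be real symmetric positive semidefinite n×n matrices annihilating the all-ones vector, such that both pairs (L_c, L_c') and (L_s, L_s') satisfy (1/(1+ε))·zᵀL_c z ≤ zᵀL_c' z ≤ (1+ε)·zᵀL_c z and (1/(1+ε))·zᵀL_s z ≤ zᵀL_s' z ≤ (1+ε)·zᵀL_s z for all z ∈ ℝⁿ. Set L = L_c − i·L_s and L' = L_c' − i·L_s'. Let ℰ and ℱ be mn×mn real diagonal matrices, set V = ℰ + i·ℱ, let 𝓛 (resp. 𝓛', 𝓛_c, 𝓛_s) be the mn×mn block-diagonal matrix with m diagonal copies of L (resp. L', L_c, L_s), let 𝒮 ∈ ℂ^{mn} be arbitrary and 𝟙 ∈ ℝ^{mn} the all-ones vector. Define Δ = sqrt( ( √(mn)·(‖ℰ𝓛_cℰ‖ + ‖ℱ𝓛_cℱ‖) + ‖𝓛_s‖·(‖ℰ‖·‖ℱ𝟙‖ + ‖ℱ‖·‖ℰ𝟙‖) )² + ( √(mn)·(‖ℰ𝓛_sℰ‖ + ‖ℱ𝓛_sℱ‖) + ‖𝓛_c‖·(‖ℱ‖·‖ℰ𝟙‖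 + ‖ℰ‖·‖ℱ𝟙‖) )² ). Then (1/√(2mn))·‖V·conj(𝓛')·conj(V)·𝟙 − 𝒮‖ ≤ (1/√(2mn))·‖V·conj(𝓛)·conj(V)·𝟙 − 𝒮‖ + ε·Δ/√(2mn), where conj denotes entrywise complex conjugation, ‖·‖ is the Euclidean norm on vectors in ℂ^{mn} and the operator 2-norm on matrices. -/

import Mathlib

open Matrix
open scoped Matrix.Norms.L2Operator

/-- The Euclidean norm of a real vector. -/
noncomputable def vnorm {ι : Type*} [Fintype ι] (v : ι → ℝ) : ℝ :=
  Real.sqrt (∑ i, v i ^ 2)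

/-- The Euclidean norm of a complex vector. -/
noncomputable def cvnorm {ι : Type*} [Fintype ι] (v : ι → ℂ) : ℝ :=
  Real.sqrt (∑ i, ‖v i‖ ^ 2)

/-! Write `D_c = 𝓛c' - 𝓛c` and `D_s = 𝓛s' - 𝓛s`. The ε-approximation hypotheses say
`-(ε • L) ≤ L' - L ≤ ε • L` in the Loewner order, which survives the block-diagonal embedding and
congruences `X ↦ Mᴴ * X * M`; and a matrix squeezed between `-B` and `B` is Hermitian with operator
norm (the supremum of its Rayleigh quotient) at most `‖B‖`. Hence `‖D‖ ≤ ε ‖𝓛‖` and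
`‖M D M‖ ≤ ε ‖M 𝓛 M‖` for `M = ℰ, ℱ`. The residual changes by `V · conj(𝓛' - 𝓛) · conj(V) · 𝟙`,
whose real part is `ℰD_cℰ𝟙 + ℱD_cℱ𝟙 + ℰD_sℱ𝟙 - ℱD_sℰ𝟙` and whose imaginary part is
`ℰD_sℰ𝟙 + ℱD_sℱ𝟙 + ℱD_cℰ𝟙 - ℰD_cℱ𝟙`; the triangle inequality bounds these by `ε` times the two
terms under the square root in `Δ`. -/

open scoped MatrixOrder ComplexOrder

section EuclideanNorm

variable {ι : Type*} [Fintype ι]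

lemma vnorm_eq_norm_toLp (v : ι → ℝ) : vnorm v = ‖WithLp.toLp 2 v‖ := by
  simp [vnorm, EuclideanSpace.norm_eq, sq_abs]

lemma cvnorm_eq_norm_toLp (v : ι → ℂ) : cvnorm v = ‖WithLp.toLp 2 v‖ := by
  simp [cvnorm, EuclideanSpace.norm_eq]

lemma vnorm_nonneg (v : ι → ℝ) : 0 ≤ vnorm v := Real.sqrt_nonneg _

lemma vnorm_add_le (u v : ι → ℝ) : vnorm (u + v) ≤ vnorm u + vnorm v := by
  simpa only [vnorm_eq_norm_toLp, WithLp.toLp_add] using norm_add_le _ _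

lemma vnorm_sub_le (u v : ι → ℝ) : vnorm (u - v) ≤ vnorm u + vnorm v := by
  simpa only [vnorm_eq_norm_toLp, WithLp.toLp_sub] using norm_sub_le _ _

lemma cvnorm_sub_le_cvnorm_sub_add_cvnorm_sub (u v w : ι → ℂ) :
    cvnorm (u - w) ≤ cvnorm (u - v) + cvnorm (v - w) := by
  simpa only [cvnorm_eq_norm_toLp, WithLp.toLp_sub] using norm_sub_le_norm_sub_add_norm_sub _ _ _

lemma vnorm_mulVec_le [DecidableEq ι] (A : Matrix ι ι ℝ) (v : ι → ℝ) :
    vnorm (A *ᵥ v) ≤ ‖A‖ * vnorm v := by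
  rw [vnorm_eq_norm_toLp, vnorm_eq_norm_toLp]
  exact A.l2_opNorm_mulVec _

lemma vnorm_one : vnorm (fun _ : ι => (1 : ℝ)) = √(Fintype.card ι) := by
  simp [vnorm]

lemma cvnorm_ofReal_add_mul_I (x y : ι → ℝ) :
    cvnorm (fun i => (x i : ℂ) + y i * Complex.I) = √(vnorm x ^ 2 + vnorm y ^ 2) := by
  rw [cvnorm, vnorm, vnorm, Real.sq_sqrt (by positivity), Real.sq_sqrt (by positivity),
    ← Finset.sum_add_distrib]
  congr! 2 with i
  rw [Complex.sq_norm, Complex.normSq_add_mul_I]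

end EuclideanNorm

namespace Matrix

section LoewnerOrder

variable {𝕜 n : Type*} [RCLike 𝕜]

lemma isHermitian_of_neg_le_of_le {A B : Matrix n n 𝕜} (h₁ : -B ≤ A) (h₂ : A ≤ B) :
    A.IsHermitian := by
  have hsum := (le_iff.mp h₁).isHermitian
  have hdiff := (le_iff.mp h₂).isHermitian
  ext i j
  have hij := congr_fun₂ hsum i j
  have hij' := congr_fun₂ hdiff i j
  simp only [conjTranspose_apply, sub_apply, neg_apply, star_sub, star_neg] at hij hij' ⊢
  linear_combination (hij - hij') / 2

variable [Fintype n]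

lemma blockDiagonal_const_le {o : Type*} [Fintype o] [DecidableEq o] {A B : Matrix n n 𝕜}
    (h : A ≤ B) : blockDiagonal (fun _ : o => A) ≤ blockDiagonal (fun _ => B) := by
  rw [le_iff, ← blockDiagonal_sub]
  change (blockDiagonal fun _ : o => B - A).PosSemidef
  rw [← kronecker_one]
  exact (le_iff.mp h).kronecker PosSemidef.one

variable [DecidableEq n]

lemma re_inner_toEuclideanCLM_self (A : Matrix n n 𝕜) (x : EuclideanSpace 𝕜 n) :
    RCLike.re (inner 𝕜 (toEuclideanCLM (n := n) (𝕜 := 𝕜) A x) x)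
      = RCLike.re (star (WithLp.ofLp x) ⬝ᵥ A *ᵥ WithLp.ofLp x) := by
  rw [← inner_conj_symm, RCLike.conj_re, EuclideanSpace.inner_eq_star_dotProduct, dotProduct_comm]
  rfl

lemma re_dotProduct_mulVec_le_l2_opNorm (B : Matrix n n 𝕜) (x : EuclideanSpace 𝕜 n) :
    RCLike.re (star (WithLp.ofLp x) ⬝ᵥ B *ᵥ WithLp.ofLp x) ≤ ‖B‖ * ‖x‖ ^ 2 := by
  rw [← re_inner_toEuclideanCLM_self, cstar_norm_def]
  calc _ ≤ ‖toEuclideanCLM (n := n) (𝕜 := 𝕜) B x‖ * ‖x‖ := re_inner_le_norm _ _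
    _ ≤ ‖toEuclideanCLM (n := n) (𝕜 := 𝕜) B‖ * ‖x‖ * ‖x‖ := by
      gcongr; exact ContinuousLinearMap.le_opNorm _ _
    _ = _ := by ring

theorem l2_opNorm_le_of_neg_le_of_le {A B : Matrix n n 𝕜} (h₁ : -B ≤ A) (h₂ : A ≤ B) :
    ‖A‖ ≤ ‖B‖ := by
  set T := toEuclideanCLM (n := n) (𝕜 := 𝕜) A
  have hT : (T : EuclideanSpace 𝕜 n →ₗ[𝕜] EuclideanSpace 𝕜 n).IsSymmetric :=
    isSymmetric_toEuclideanLin_iff.mpr (isHermitian_of_neg_le_of_le h₁ h₂)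
  rw [cstar_norm_def A, T.norm_eq_iSup_rayleighQuotient hT]
  refine ciSup_le fun x => ?_
  have hq : ∀ M : Matrix n n 𝕜, M.PosSemidef →
      0 ≤ RCLike.re (star (WithLp.ofLp x) ⬝ᵥ M *ᵥ WithLp.ofLp x) := fun M hM =>
    (RCLike.nonneg_iff.mp (hM.dotProduct_mulVec_nonneg _)).1
  have hlow := hq _ (le_iff.mp h₁)
  have hupp := hq _ (le_iff.mp h₂)
  simp only [sub_neg_eq_add, add_mulVec, sub_mulVec, dotProduct_add, dotProduct_sub, map_add,
    map_sub] at hlow hupp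
  have hB := re_dotProduct_mulVec_le_l2_opNorm B x
  rw [ContinuousLinearMap.rayleighQuotient, ContinuousLinearMap.reApplyInnerSelf_apply,
    re_inner_toEuclideanCLM_self, abs_div, abs_sq]
  rcases eq_or_lt_of_le (sq_nonneg ‖x‖) with hx | hx
  · rw [← hx, div_zero]; exact norm_nonneg _
  · rw [div_le_iff₀ hx, abs_le]; constructor <;> linarith

theorem l2_opNorm_conjTranspose_mul_mul_le {A B : Matrix n n 𝕜} (h₁ : -B ≤ A) (h₂ : A ≤ B)
    (M : Matrix n n 𝕜) : ‖Mᴴ * A * M‖ ≤ ‖Mᴴ * B * M‖ := by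
  refine l2_opNorm_le_of_neg_le_of_le ?_ ?_
  · simpa [star_eq_conjTranspose] using star_left_conjugate_le_conjugate h₁ M
  · simpa [star_eq_conjTranspose] using star_left_conjugate_le_conjugate h₂ M

end LoewnerOrder

section LoewnerClose

variable {n : Type*} [Fintype n] {ε : ℝ} {L L' : Matrix n n ℝ}

def LoewnerClose (ε : ℝ) (L L' : Matrix n n ℝ) : Prop :=
  -(ε • L) ≤ L' - L ∧ L' - L ≤ ε • L

lemma LoewnerClose.of_sandwich (hε : 0 ≤ ε) (hL : L.PosSemidef) (hL' : L'.IsHermitian)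
    (h : ∀ z : n → ℝ, (1 / (1 + ε)) * (z ⬝ᵥ L *ᵥ z) ≤ z ⬝ᵥ L' *ᵥ z ∧
      z ⬝ᵥ L' *ᵥ z ≤ (1 + ε) * (z ⬝ᵥ L *ᵥ z)) :
    LoewnerClose ε L L' := by
  have hεL : (ε • L).IsHermitian := hL.1.smul (IsSelfAdjoint.all ε)
  refine ⟨le_iff.mpr (.of_dotProduct_mulVec_nonneg ((hL'.sub hL.1).sub hεL.neg) fun z => ?_),
    le_iff.mpr (.of_dotProduct_mulVec_nonneg (hεL.sub (hL'.sub hL.1)) fun z => ?_)⟩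
  all_goals
    have hq := hL.dotProduct_mulVec_nonneg z
    obtain ⟨hlow, hupp⟩ := h z
    simp only [star_trivial, sub_mulVec, neg_mulVec, smul_mulVec, dotProduct_sub,
      dotProduct_neg, dotProduct_smul, smul_eq_mul] at hq ⊢
  · have : (1 - ε) * (z ⬝ᵥ L *ᵥ z) ≤ 1 / (1 + ε) * (z ⬝ᵥ L *ᵥ z) := by
      gcongr
      rw [le_div_iff₀ (by positivity)]
      nlinarith
    linarith
  · linarith

lemma LoewnerClose.blockDiagonal {o : Type*} [Fintype o] [DecidableEq o]
    (h : LoewnerClose ε L L') :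
    LoewnerClose ε (blockDiagonal fun _ : o => L) (blockDiagonal fun _ => L') := by
  rw [LoewnerClose, ← blockDiagonal_smul, ← blockDiagonal_neg, ← blockDiagonal_sub]
  exact ⟨blockDiagonal_const_le h.1, blockDiagonal_const_le h.2⟩

lemma LoewnerClose.l2_opNorm_conjTranspose_mul_sub_mul_le [DecidableEq n] (hε : 0 ≤ ε)
    (h : LoewnerClose ε L L') (M : Matrix n n ℝ) :
    ‖Mᴴ * (L' - L) * M‖ ≤ ε * ‖Mᴴ * L * M‖ := by
  have := l2_opNorm_conjTranspose_mul_mul_le h.1 h.2 M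
  rwa [Matrix.mul_smul, Matrix.smul_mul, norm_smul, Real.norm_of_nonneg hε] at this

lemma LoewnerClose.l2_opNorm_sub_le [DecidableEq n] (hε : 0 ≤ ε) (h : LoewnerClose ε L L') :
    ‖L' - L‖ ≤ ε * ‖L‖ := by
  simpa using h.l2_opNorm_conjTranspose_mul_sub_mul_le hε 1

end LoewnerClose

end Matrix

section ComplexSplitting

open Complex

variable {ι κ : Type*}

lemma ofReal_add_I_smul_mulVec [Fintype ι] (A B : Matrix κ ι ℝ) (x y : ι → ℝ) :
    (A.map ofReal + I • B.map ofReal) *ᵥ (fun j => (x j : ℂ) + y j * I)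
      = fun i => ((A *ᵥ x - B *ᵥ y) i : ℂ) + (B *ᵥ x + A *ᵥ y) i * I := by
  funext i
  apply Complex.ext <;>
    simp [mulVec, dotProduct, Finset.sum_add_distrib, Finset.sum_sub_distrib, add_comm]

lemma map_conj_ofReal_add_I_smul (A B : Matrix κ ι ℝ) :
    (A.map ofReal + I • B.map ofReal).map (starRingEnd ℂ) = A.map ofReal + I • (-B).map ofReal := by
  ext i j; simp

lemma sandwich_mulVec_ofReal [Fintype ι] (E F C S : Matrix ι ι ℝ) (u : ι → ℝ) :
    ((E.map ofReal + I • F.map ofReal) * (C.map ofReal - I • S.map ofReal).map (starRingEnd ℂ)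
        * (E.map ofReal + I • F.map ofReal).map (starRingEnd ℂ)) *ᵥ (fun i => (u i : ℂ))
      = fun i =>
        ((E *ᵥ (C *ᵥ (E *ᵥ u)) + F *ᵥ (C *ᵥ (F *ᵥ u)) + E *ᵥ (S *ᵥ (F *ᵥ u))
          - F *ᵥ (S *ᵥ (E *ᵥ u))) i : ℂ) +
        (E *ᵥ (S *ᵥ (E *ᵥ u)) + F *ᵥ (S *ᵥ (F *ᵥ u)) + F *ᵥ (C *ᵥ (E *ᵥ u))
          - E *ᵥ (C *ᵥ (F *ᵥ u))) i * I := by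
  have hu : (fun i => (u i : ℂ)) = fun j => (u j : ℂ) + (0 : ι → ℝ) j * I := by
    ext; simp
  have hC : C.map ofReal - I • S.map ofReal = C.map ofReal + I • (-S).map ofReal := by
    ext i j; simp [sub_eq_add_neg]
  rw [hu, hC, map_conj_ofReal_add_I_smul, map_conj_ofReal_add_I_smul, ← mulVec_mulVec,
    ← mulVec_mulVec, ofReal_add_I_smul_mulVec, ofReal_add_I_smul_mulVec, ofReal_add_I_smul_mulVec]
  ext i
  simp only [mulVec_zero, sub_zero, mulVec_mulVec, neg_neg, neg_mulVec, add_zero, mulVec_neg,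
    sub_neg_eq_add, mulVec_add, Pi.sub_apply, Pi.add_apply, Pi.neg_apply, ofReal_sub, ofReal_add,
    ofReal_neg]
  ring

end ComplexSplitting

section SandwichEstimate

variable {ι : Type*} [Fintype ι] [DecidableEq ι]

lemma vnorm_mulVec_mulVec_le (A B : Matrix ι ι ℝ) (u : ι → ℝ) :
    vnorm (A *ᵥ (B *ᵥ u)) ≤ ‖A‖ * (‖B‖ * vnorm u) :=
  (vnorm_mulVec_le A _).trans (mul_le_mul_of_nonneg_left (vnorm_mulVec_le B u) (norm_nonneg A))

lemma vnorm_sandwich_component_le {ε P Q R : ℝ} (E F C S X Y : Matrix ι ι ℝ) (u : ι → ℝ)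
    (hE : ‖E * C * E‖ ≤ ε * P) (hF : ‖F * C * F‖ ≤ ε * Q) (hS : ‖S‖ ≤ ε * R) :
    vnorm (E *ᵥ (C *ᵥ (E *ᵥ u)) + F *ᵥ (C *ᵥ (F *ᵥ u)) + X *ᵥ (S *ᵥ (Y *ᵥ u))
        - Y *ᵥ (S *ᵥ (X *ᵥ u)))
      ≤ ε * (vnorm u * (P + Q) + R * (‖X‖ * vnorm (Y *ᵥ u) + ‖Y‖ * vnorm (X *ᵥ u))) := by
  have hM : ∀ M : Matrix ι ι ℝ, vnorm (M *ᵥ (C *ᵥ (M *ᵥ u))) ≤ ‖M * C * M‖ * vnorm u := by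
    intro M
    rw [mulVec_mulVec, mulVec_mulVec]
    exact vnorm_mulVec_le _ u
  have hXY := vnorm_mulVec_mulVec_le X S (Y *ᵥ u)
  have hYX := vnorm_mulVec_mulVec_le Y S (X *ᵥ u)
  have hu := vnorm_nonneg u
  have hXu := vnorm_nonneg (X *ᵥ u)
  have hYu := vnorm_nonneg (Y *ᵥ u)
  calc _ ≤ vnorm (E *ᵥ (C *ᵥ (E *ᵥ u))) + vnorm (F *ᵥ (C *ᵥ (F *ᵥ u)))
        + vnorm (X *ᵥ (S *ᵥ (Y *ᵥ u))) + vnorm (Y *ᵥ (S *ᵥ (X *ᵥ u))) := by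
        grw [vnorm_sub_le, vnorm_add_le, vnorm_add_le]
    _ ≤ ε * P * vnorm u + ε * Q * vnorm u
        + ‖X‖ * (ε * R * vnorm (Y *ᵥ u)) + ‖Y‖ * (ε * R * vnorm (X *ᵥ u)) := by
        grw [hM, hM, hXY, hYX, hE, hF, hS]
    _ = _ := by ring

lemma cvnorm_sandwich_le {ε : ℝ} (hε : 0 ≤ ε) {E F C C' S S' : Matrix ι ι ℝ} (hE : Eᴴ = E)
    (hF : Fᴴ = F) (hC : LoewnerClose ε C C') (hS : LoewnerClose ε S S') (u : ι → ℝ) :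
    cvnorm (((E.map Complex.ofReal + Complex.I • F.map Complex.ofReal) *
        ((C' - C).map Complex.ofReal - Complex.I • (S' - S).map Complex.ofReal).map (starRingEnd ℂ) *
        (E.map Complex.ofReal + Complex.I • F.map Complex.ofReal).map (starRingEnd ℂ)) *ᵥ
        (fun i => (u i : ℂ)))
      ≤ ε * √((vnorm u * (‖E * C * E‖ + ‖F * C * F‖) +
            ‖S‖ * (‖E‖ * vnorm (F *ᵥ u) + ‖F‖ * vnorm (E *ᵥ u))) ^ 2 +
          (vnorm u * (‖E * S * E‖ + ‖F * S * F‖) +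
            ‖C‖ * (‖F‖ * vnorm (E *ᵥ u) + ‖E‖ * vnorm (F *ᵥ u))) ^ 2) := by
  rw [sandwich_mulVec_ofReal, cvnorm_ofReal_add_mul_I, ← Real.sqrt_sq hε,
    ← Real.sqrt_mul (sq_nonneg ε), mul_add, ← mul_pow, ← mul_pow]
  refine Real.sqrt_le_sqrt (add_le_add (pow_le_pow_left₀ (vnorm_nonneg _) ?_ 2)
    (pow_le_pow_left₀ (vnorm_nonneg _) ?_ 2))
  · exact vnorm_sandwich_component_le _ _ _ _ _ _ _
      (by simpa only [hE] using hC.l2_opNorm_conjTranspose_mul_sub_mul_le hε E)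
      (by simpa only [hF] using hC.l2_opNorm_conjTranspose_mul_sub_mul_le hε F)
      (hS.l2_opNorm_sub_le hε)
  · exact vnorm_sandwich_component_le _ _ _ _ _ _ _
      (by simpa only [hE] using hS.l2_opNorm_conjTranspose_mul_sub_mul_le hε E)
      (by simpa only [hF] using hS.l2_opNorm_conjTranspose_mul_sub_mul_le hε F)
      (hC.l2_opNorm_sub_le hε)

end SandwichEstimate

theorem ac_sparse_rms_bound_general
    (n m : ℕ) (ε : ℝ) (hε : 0 ≤ ε)
    (Lc Ls Lc' Ls' : Matrix (Fin n) (Fin n) ℝ)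
    (hLc : Lc.PosSemidef) (hLs : Ls.PosSemidef) (hLc' : Lc'.PosSemidef) (hLs' : Ls'.PosSemidef)
    (hsandc : ∀ z : Fin n → ℝ,
      (1 / (1 + ε)) * (z ⬝ᵥ Lc.mulVec z) ≤ z ⬝ᵥ Lc'.mulVec z ∧
      z ⬝ᵥ Lc'.mulVec z ≤ (1 + ε) * (z ⬝ᵥ Lc.mulVec z))
    (hsands : ∀ z : Fin n → ℝ,
      (1 / (1 + ε)) * (z ⬝ᵥ Ls.mulVec z) ≤ z ⬝ᵥ Ls'.mulVec z ∧
      z ⬝ᵥ Ls'.mulVec z ≤ (1 + ε) * (z ⬝ᵥ Ls.mulVec z))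
    -- the mn×mn real diagonal matrices ℰ and ℱ, and the complex voltage matrix V = ℰ + iℱ
    (E F : Fin n × Fin m → ℝ)
    (Emat Fmat : Matrix (Fin n × Fin m) (Fin n × Fin m) ℝ)
    (hE : Emat = diagonal E) (hF : Fmat = diagonal F)
    (V : Matrix (Fin n × Fin m) (Fin n × Fin m) ℂ)
    (hV : V = Emat.map Complex.ofReal + Complex.I • Fmat.map Complex.ofReal)
    -- the block-diagonal matrices 𝓛c, 𝓛s, 𝓛 = 𝓛c − i𝓛s and 𝓛' = 𝓛c' − i𝓛s'
    (𝓛c 𝓛s 𝓛c' 𝓛s' : Matrix (Fin n × Fin m) (Fin n × Fin m) ℝ)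
    (h𝓛c : 𝓛c = blockDiagonal (fun _ => Lc)) (h𝓛s : 𝓛s = blockDiagonal (fun _ => Ls))
    (h𝓛c' : 𝓛c' = blockDiagonal (fun _ => Lc')) (h𝓛s' : 𝓛s' = blockDiagonal (fun _ => Ls'))
    (𝓛 𝓛' : Matrix (Fin n × Fin m) (Fin n × Fin m) ℂ)
    (h𝓛 : 𝓛 = 𝓛c.map Complex.ofReal - Complex.I • 𝓛s.map Complex.ofReal)
    (h𝓛' : 𝓛' = 𝓛c'.map Complex.ofReal - Complex.I • 𝓛s'.map Complex.ofReal)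
    (S : Fin n × Fin m → ℂ)
    (Δ : ℝ)
    (hΔ : Δ = Real.sqrt (
      (Real.sqrt (m * n) * (‖Emat * 𝓛c * Emat‖ + ‖Fmat * 𝓛c * Fmat‖) +
        ‖𝓛s‖ * (‖Emat‖ * vnorm (Fmat.mulVec (fun _ => 1)) +
                 ‖Fmat‖ * vnorm (Emat.mulVec (fun _ => 1)))) ^ 2 +
      (Real.sqrt (m * n) * (‖Emat * 𝓛s * Emat‖ + ‖Fmat * 𝓛s * Fmat‖) +
        ‖𝓛c‖ * (‖Fmat‖ * vnorm (Emat.mulVec (fun _ => 1)) +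
                 ‖Emat‖ * vnorm (Fmat.mulVec (fun _ => 1)))) ^ 2)) :
    (1 / Real.sqrt (2 * m * n)) *
        cvnorm ((V * 𝓛'.map (starRingEnd ℂ) * V.map (starRingEnd ℂ)).mulVec (fun _ => 1) - S) ≤
      (1 / Real.sqrt (2 * m * n)) *
        cvnorm ((V * 𝓛.map (starRingEnd ℂ) * V.map (starRingEnd ℂ)).mulVec (fun _ => 1) - S) +
        ε * Δ / Real.sqrt (2 * m * n) := by
  have hc : LoewnerClose ε 𝓛c 𝓛c' := by
    rw [h𝓛c, h𝓛c']; exact (LoewnerClose.of_sandwich hε hLc hLc'.1 hsandc).blockDiagonal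
  have hs : LoewnerClose ε 𝓛s 𝓛s' := by
    rw [h𝓛s, h𝓛s']; exact (LoewnerClose.of_sandwich hε hLs hLs'.1 hsands).blockDiagonal
  have hEH : Ematᴴ = Emat := by rw [hE, diagonal_conjTranspose, star_trivial]
  have hFH : Fmatᴴ = Fmat := by rw [hF, diagonal_conjTranspose, star_trivial]
  have hdiff : 𝓛'.map (starRingEnd ℂ) - 𝓛.map (starRingEnd ℂ)
      = ((𝓛c' - 𝓛c).map Complex.ofReal - Complex.I • (𝓛s' - 𝓛s).map Complex.ofReal).map
        (starRingEnd ℂ) := by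
    rw [h𝓛, h𝓛']
    ext i j
    simp only [Matrix.sub_apply, map_apply, Matrix.smul_apply, smul_eq_mul, map_sub,
      Complex.conj_ofReal, map_mul, Complex.conj_I, neg_mul, sub_neg_eq_add, Complex.ofReal_sub]
    ring
  have hone : (fun _ => (1 : ℂ)) = fun i => (((fun _ => 1) : Fin n × Fin m → ℝ) i : ℂ) := by
    simp
  have hsqrt : vnorm (fun _ : Fin n × Fin m => (1 : ℝ)) = √(m * n) := by
    simp [vnorm_one, mul_comm]
  have hcvnorm : cvnorm ((V * 𝓛'.map (starRingEnd ℂ) * V.map (starRingEnd ℂ)) *ᵥ (fun _ => 1)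
      - (V * 𝓛.map (starRingEnd ℂ) * V.map (starRingEnd ℂ)) *ᵥ (fun _ => 1)) ≤ ε * Δ := by
    rw [← sub_mulVec, ← sub_mul, ← mul_sub, hdiff, hV, hone, hΔ, ← hsqrt]
    exact cvnorm_sandwich_le hε hEH hFH hc hs _
  calc _ ≤ (1 / √(2 * m * n)) * (ε * Δ + cvnorm ((V * 𝓛.map (starRingEnd ℂ) *
          V.map (starRingEnd ℂ)) *ᵥ (fun _ => 1) - S)) := by
        grw [cvnorm_sub_le_cvnorm_sub_add_cvnorm_sub _
          ((V * 𝓛.map (starRingEnd ℂ) * V.map (starRingEnd ℂ)) *ᵥ (fun _ => 1)), hcvnorm]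
    _ = _ := by ring

/-- Main AC theorem. If the conductance and susceptance Laplacians of an AC
network are ε-approximated, then the fitting error of the sparse network exceeds that of the
original by at most `ε·Δ/√(2mn)`. -/
theorem ac_sparse_rms_bound
    (n m : ℕ) (hn : 1 ≤ n) (hm : 1 ≤ m) (ε : ℝ) (hε : 0 ≤ ε)
    (Lc Ls Lc' Ls' : Matrix (Fin n) (Fin n) ℝ)
    (hLc : Lc.PosSemidef) (hLs : Ls.PosSemidef) (hLc' : Lc'.PosSemidef) (hLs' : Ls'.PosSemidef)
    (hLc1 : Lc.mulVec (fun _ => 1) = 0) (hLs1 : Ls.mulVec (fun _ => 1) = 0)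
    (hLc'1 : Lc'.mulVec (fun _ => 1) = 0) (hLs'1 : Ls'.mulVec (fun _ => 1) = 0)
    (hsandc : ∀ z : Fin n → ℝ,
      (1 / (1 + ε)) * (z ⬝ᵥ Lc.mulVec z) ≤ z ⬝ᵥ Lc'.mulVec z ∧
      z ⬝ᵥ Lc'.mulVec z ≤ (1 + ε) * (z ⬝ᵥ Lc.mulVec z))
    (hsands : ∀ z : Fin n → ℝ,
      (1 / (1 + ε)) * (z ⬝ᵥ Ls.mulVec z) ≤ z ⬝ᵥ Ls'.mulVec z ∧
      z ⬝ᵥ Ls'.mulVec z ≤ (1 + ε) * (z ⬝ᵥ Ls.mulVec z))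
    -- the mn×mn real diagonal matrices ℰ and ℱ, and the complex voltage matrix V = ℰ + iℱ
    (E F : Fin n × Fin m → ℝ)
    (Emat Fmat : Matrix (Fin n × Fin m) (Fin n × Fin m) ℝ)
    (hE : Emat = diagonal E) (hF : Fmat = diagonal F)
    (V : Matrix (Fin n × Fin m) (Fin n × Fin m) ℂ)
    (hV : V = Emat.map Complex.ofReal + Complex.I • Fmat.map Complex.ofReal)
    -- the block-diagonal matrices 𝓛c, 𝓛s, 𝓛 = 𝓛c − i𝓛s and 𝓛' = 𝓛c' − i𝓛s'
    (𝓛c 𝓛s 𝓛c' 𝓛s' : Matrix (Fin n × Fin m) (Fin n × Fin m) ℝ)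
    (h𝓛c : 𝓛c = blockDiagonal (fun _ => Lc)) (h𝓛s : 𝓛s = blockDiagonal (fun _ => Ls))
    (h𝓛c' : 𝓛c' = blockDiagonal (fun _ => Lc')) (h𝓛s' : 𝓛s' = blockDiagonal (fun _ => Ls'))
    (𝓛 𝓛' : Matrix (Fin n × Fin m) (Fin n × Fin m) ℂ)
    (h𝓛 : 𝓛 = 𝓛c.map Complex.ofReal - Complex.I • 𝓛s.map Complex.ofReal)
    (h𝓛' : 𝓛' = 𝓛c'.map Complex.ofReal - Complex.I • 𝓛s'.map Complex.ofReal)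
    (S : Fin n × Fin m → ℂ)
    (Δ : ℝ)
    (hΔ : Δ = Real.sqrt (
      (Real.sqrt (m * n) * (‖Emat * 𝓛c * Emat‖ + ‖Fmat * 𝓛c * Fmat‖) +
        ‖𝓛s‖ * (‖Emat‖ * vnorm (Fmat.mulVec (fun _ => 1)) +
                 ‖Fmat‖ * vnorm (Emat.mulVec (fun _ => 1)))) ^ 2 +
      (Real.sqrt (m * n) * (‖Emat * 𝓛s * Emat‖ + ‖Fmat * 𝓛s * Fmat‖) +
        ‖𝓛c‖ * (‖Fmat‖ * vnorm (Emat.mulVec (fun _ => 1)) +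
                 ‖Emat‖ * vnorm (Fmat.mulVec (fun _ => 1)))) ^ 2)) :
    (1 / Real.sqrt (2 * m * n)) *
        cvnorm ((V * 𝓛'.map (starRingEnd ℂ) * V.map (starRingEnd ℂ)).mulVec (fun _ => 1) - S) ≤
      (1 / Real.sqrt (2 * m * n)) *
        cvnorm ((V * 𝓛.map (starRingEnd ℂ) * V.map (starRingEnd ℂ)).mulVec (fun _ => 1) - S) +
        ε * Δ / Real.sqrt (2 * m * n) :=
  ac_sparse_rms_bound_general n m ε hε Lc Ls Lc' Ls' hLc hLs hLc' hLs' hsandc hsands E F Emat Fmat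
    hE hF V hV 𝓛c 𝓛s 𝓛c' 𝓛s' h𝓛c h𝓛s h𝓛c' h𝓛s' 𝓛 𝓛' h𝓛 h𝓛' S Δ hΔ
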